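/- Let ρ(z) = −conj(z) and let υ : S¹ × S¹ × D² → S¹ × S¹ × D² be the involution υ(t,z,w) = (ρ(t), conj(z), w). Then the quotient topological space of S¹ × S¹ × D² by the equivalence relation identifying a point with its image under υ is homeomorphic to S² × D², the product of the unit 2-sphere in ℝ³ with the closed unit disk. -/

import Mathlib

/-- The unit circle in the complex plane. -/
def S1 : Set ℂ := {z : ℂ | ‖z‖ = 1}

/-- The closed unit disk in the complex plane. -/
def D2 : Set ℂ := {w : ℂ | ‖w‖ ≤ 1}

/-- The involution `υ(t,z,w) = (ρ(t), conj z, w)` of `S¹ × S¹ × D²`, where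
`ρ(t) = −conj t` is reflection in the imaginary axis. -/
def upsilon (p : ↥(S1 ×ˢ S1 ×ˢ D2)) : ↥(S1 ×ˢ S1 ×ˢ D2) :=
  ⟨(-(starRingEnd ℂ) p.val.1, (starRingEnd ℂ) p.val.2.1, p.val.2.2), by
    obtain ⟨h1, h2, h3⟩ := p.property
    simp only [S1, D2, Set.mem_prod, Set.mem_setOf_eq] at *
    exact ⟨by simp [h1], by simp [h2], h3⟩⟩

/-!
On `S¹ × S¹` the map `(t, z) ↦ (Im t, Re z, Re t · Im z)` is invariant under
`(t, z) ↦ (-conj t, conj z)`, and its image is the "pillowcase" `c² = (1 - y²)(1 - u²)` over the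
square `[-1, 1]²`: two squares glued along their boundary. A point `(y, u, c)` of it determines
`(t, z)` up to the simultaneous sign change of `(Re t, Im z)`, that is, up to the involution, and
each ray from the origin meets the pillowcase exactly once, so radial projection onto `S²` keeps
these properties. Hence `(t, z, w) ↦ (radial projection, w)` induces a continuous bijection from
the compact quotient onto the Hausdorff space `S² × D²`, which is a homeomorphism.
-/

section QuotientHomeomorph

variable {X Y : Type*} [TopologicalSpace X] [CompactSpace X] [TopologicalSpace Y] [T2Space Y]

theorem Quot.nonempty_homeomorph_of_continuous_surjective {r : X → X → Prop} {f : X → Y}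
    (hf : Continuous f) (hsurj : Function.Surjective f) (hr : ∀ a b, r a b → f a = f b)
    (hfiber : ∀ a b, f a = f b → a = b ∨ r a b) :
    Nonempty (Quot r ≃ₜ Y) := by
  let g : Quot r → Y := Quot.lift f hr
  have hinj : Function.Injective g := by
    rintro ⟨a⟩ ⟨b⟩ hab
    rcases hfiber a b hab with rfl | hr
    · rfl
    · exact Quot.sound hr
  have hbij : Function.Bijective g := ⟨hinj, Quot.surjective_lift hr |>.mpr hsurj⟩
  exact ⟨(continuous_quot_lift hr hf).homeoOfEquivCompactToT2 (f := Equiv.ofBijective g hbij)⟩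

end QuotientHomeomorph

theorem eq_one_of_mul_one_sub_mul_one_sub_eq {a b L : ℝ} (ha : 0 ≤ a) (ha1 : a ≤ 1)
    (hb : 0 ≤ b) (hb1 : b ≤ 1) (hLa : L * a ≤ 1) (hLb : L * b ≤ 1)
    (h : L * ((1 - a) * (1 - b)) = (1 - L * a) * (1 - L * b)) : L = 1 := by
  have hfactor : (L - 1) * (L * a * b - 1) = 0 := by linear_combination -h
  rcases mul_eq_zero.mp hfactor with hL | hLab
  · linarith
  · have hL0 : 0 < L := by by_contra! hL; nlinarith [mul_nonneg ha hb]
    have hL1 : 1 ≤ L := by nlinarith [mul_nonneg hL0.le (sub_nonneg.2 (mul_le_one₀ ha1 hb hb1))]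
    nlinarith [mul_le_mul hLa hLb (by positivity) zero_le_one]

theorem eq_and_eq_or_eq_neg_and_eq_neg {x v x' v' : ℝ} (hx : x' ^ 2 = x ^ 2)
    (hv : v' ^ 2 = v ^ 2) (h : x' * v' = x * v) :
    (x' = x ∧ v' = v) ∨ (x' = -x ∧ v' = -v) := by
  rcases sq_eq_sq_iff_eq_or_eq_neg.mp hx with rfl | rfl <;>
    rcases sq_eq_sq_iff_eq_or_eq_neg.mp hv with rfl | rfl
  · exact .inl ⟨rfl, rfl⟩
  · rcases mul_eq_zero.mp (show x' * v = 0 by linarith) with rfl | rfl <;> simp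
  · rcases mul_eq_zero.mp (show x * v' = 0 by linarith) with rfl | rfl <;> simp
  · exact .inr ⟨rfl, rfl⟩

theorem exists_sq_eq_sq_eq_mul_eq {p q c : ℝ} (hp : 0 ≤ p) (hq : 0 ≤ q) (h : c ^ 2 = p * q) :
    ∃ x v : ℝ, x ^ 2 = p ∧ v ^ 2 = q ∧ x * v = c := by
  have hsqrt : √p * √q = |c| := by rw [← Real.sqrt_mul hp, ← h, Real.sqrt_sq_eq_abs]
  rcases le_total 0 c with hc | hc
  · exact ⟨√p, √q, Real.sq_sqrt hp, Real.sq_sqrt hq, by rw [hsqrt, abs_of_nonneg hc]⟩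
  · exact ⟨-√p, √q, by rw [neg_sq, Real.sq_sqrt hp], Real.sq_sqrt hq,
      by rw [neg_mul, hsqrt, abs_of_nonpos hc, neg_neg]⟩

theorem exists_pos_eq_one_add_mul_sq {a b : ℝ} (ha : 0 ≤ a) (hb : 0 ≤ b) (hab : a + b ≤ 1) :
    ∃ σ : ℝ, 0 < σ ∧ σ = 1 + a * b * σ ^ 2 ∧ σ * a ≤ 1 ∧ σ * b ≤ 1 := by
  set r := √(1 - 4 * a * b)
  have hr : 0 ≤ r := Real.sqrt_nonneg _
  have hr2 : r ^ 2 = 1 - 4 * a * b :=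
    Real.sq_sqrt (by nlinarith [sq_nonneg (a - b), mul_le_one₀ hab (by positivity) hab])
  have hra : 2 * a - 1 ≤ r := abs_le_of_sq_le_sq' (by nlinarith) hr |>.2
  have hrb : 2 * b - 1 ≤ r := abs_le_of_sq_le_sq' (by nlinarith) hr |>.2
  refine ⟨2 / (1 + r), by positivity, ?_, ?_, ?_⟩
  · field_simp
    nlinarith
  · rw [div_mul_eq_mul_div, div_le_one (by positivity)]; linarith
  · rw [div_mul_eq_mul_div, div_le_one (by positivity)]; linarith

section Pillowcase

open ComplexConjugate

theorem mem_S1_iff {t : ℂ} : t ∈ S1 ↔ t.re ^ 2 + t.im ^ 2 = 1 := by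
  show ‖t‖ = 1 ↔ _
  rw [← pow_eq_one_iff_of_nonneg (norm_nonneg t) two_ne_zero,
    Complex.sq_norm, Complex.normSq_apply, sq, sq]

instance : CompactSpace ↥(S1 ×ˢ S1 ×ˢ D2) := by
  have hS1 : S1 = Metric.sphere (0 : ℂ) 1 := by ext; simp [S1]
  have hD2 : D2 = Metric.closedBall (0 : ℂ) 1 := by ext; simp [D2]
  rw [← isCompact_iff_compactSpace, hS1, hD2]
  exact (isCompact_sphere 0 1).prod ((isCompact_sphere 0 1).prod (isCompact_closedBall 0 1))

def pillow (t z : ℂ) : EuclideanSpace ℝ (Fin 3) := !₂[t.im, z.re, t.re * z.im]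

theorem pillow_neg_conj_conj (t z : ℂ) : pillow (-conj t) (conj z) = pillow t z := by
  simp [pillow]

theorem pillow_ne_zero {t z : ℂ} (ht : t ∈ S1) (hz : z ∈ S1) : pillow t z ≠ 0 := by
  intro h
  have h0 : t.im = 0 := by simpa [pillow] using congrArg (· 0) h
  have h1 : z.re = 0 := by simpa [pillow] using congrArg (· 1) h
  have h2 : t.re * z.im = 0 := by simpa [pillow] using congrArg (· 2) h
  rw [mem_S1_iff] at ht hz
  nlinarith

theorem pillow_eq_of_smul_pillow_eq {t z t' z' : ℂ} (ht : t ∈ S1) (hz : z ∈ S1)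
    (ht' : t' ∈ S1) (hz' : z' ∈ S1) {l : ℝ} (hl : 0 < l) (h : l • pillow t z = pillow t' z') :
    pillow t' z' = pillow t z := by
  have h0 : l * t.im = t'.im := by simpa [pillow] using congrArg (· 0) h
  have h1 : l * z.re = z'.re := by simpa [pillow] using congrArg (· 1) h
  have h2 : l * (t.re * z.im) = t'.re * z'.im := by simpa [pillow] using congrArg (· 2) h
  rw [mem_S1_iff] at ht hz ht' hz'
  have e1 : 1 - l ^ 2 * t.im ^ 2 = t'.re ^ 2 := by rw [← mul_pow, h0]; linarith
  have e2 : 1 - l ^ 2 * z.re ^ 2 = z'.im ^ 2 := by rw [← mul_pow, h1]; linarith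
  have hl2 : l ^ 2 = 1 := by
    refine eq_one_of_mul_one_sub_mul_one_sub_eq (sq_nonneg t.im) (by linarith [sq_nonneg t.re])
      (sq_nonneg z.re) (by linarith [sq_nonneg z.im]) (by linarith [sq_nonneg t'.re])
      (by linarith [sq_nonneg z'.im]) ?_
    rw [e1, e2, show 1 - t.im ^ 2 = t.re ^ 2 by linarith, show 1 - z.re ^ 2 = z.im ^ 2 by linarith]
    linear_combination congrArg (· ^ 2) h2
  rw [← h, (pow_eq_one_iff_of_nonneg hl.le two_ne_zero).mp hl2, one_smul]

theorem eq_or_eq_neg_conj_of_pillow_eq {t z t' z' : ℂ} (ht : t ∈ S1) (hz : z ∈ S1)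
    (ht' : t' ∈ S1) (hz' : z' ∈ S1) (h : pillow t' z' = pillow t z) :
    (t' = t ∧ z' = z) ∨ (t' = -conj t ∧ z' = conj z) := by
  have h0 : t'.im = t.im := by simpa [pillow] using congrArg (· 0) h
  have h1 : z'.re = z.re := by simpa [pillow] using congrArg (· 1) h
  have h2 : t'.re * z'.im = t.re * z.im := by simpa [pillow] using congrArg (· 2) h
  rw [mem_S1_iff] at ht hz ht' hz'
  rcases eq_and_eq_or_eq_neg_and_eq_neg (x := t.re) (v := z.im) (by rw [h0] at ht'; linarith)
    (by rw [h1] at hz'; linarith) h2 with ⟨hre, him⟩ | ⟨hre, him⟩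
  · exact .inl ⟨Complex.ext hre h0, Complex.ext h1 him⟩
  · exact .inr ⟨Complex.ext (by simpa using hre) (by simpa using h0),
      Complex.ext (by simpa using h1) (by simpa using him)⟩

theorem exists_pillow_eq_smul {ω : EuclideanSpace ℝ (Fin 3)} (hω : ‖ω‖ = 1) :
    ∃ t ∈ S1, ∃ z ∈ S1, ∃ s : ℝ, 0 < s ∧ pillow t z = s • ω := by
  have hsum : ω 0 ^ 2 + ω 1 ^ 2 + ω 2 ^ 2 = 1 := by
    simpa [hω, Fin.sum_univ_three] using (EuclideanSpace.real_norm_sq_eq ω).symm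
  obtain ⟨σ, hσ, hσeq, hσa, hσb⟩ := exists_pos_eq_one_add_mul_sq (sq_nonneg (ω 0))
    (sq_nonneg (ω 1)) (by nlinarith [sq_nonneg (ω 2)])
  set s := √σ
  have hs : s ^ 2 = σ := Real.sq_sqrt hσ.le
  obtain ⟨x, v, hx, hv, hxv⟩ := exists_sq_eq_sq_eq_mul_eq (c := s * ω 2)
    (sub_nonneg.2 (by rwa [mul_pow, hs] : (s * ω 0) ^ 2 ≤ 1))
    (sub_nonneg.2 (by rwa [mul_pow, hs] : (s * ω 1) ^ 2 ≤ 1))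
    (by rw [mul_pow, mul_pow, mul_pow, hs]; linear_combination σ * hsum + hσeq)
  refine ⟨⟨x, s * ω 0⟩, mem_S1_iff.2 (by dsimp only; linarith), ⟨s * ω 1, v⟩,
    mem_S1_iff.2 (by dsimp only; linarith), s, Real.sqrt_pos.2 hσ, ?_⟩
  ext i
  fin_cases i <;> simp [pillow, hxv]

noncomputable def pillowMap (q : ↥(S1 ×ˢ S1 ×ˢ D2)) :
    ↥(Metric.sphere (0 : EuclideanSpace ℝ (Fin 3)) 1) × ↥D2 :=
  (⟨‖pillow q.1.1 q.1.2.1‖⁻¹ • pillow q.1.1 q.1.2.1, by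
      rw [mem_sphere_zero_iff_norm]
      exact norm_smul_inv_norm (pillow_ne_zero q.2.1 q.2.2.1)⟩,
    ⟨q.1.2.2, q.2.2.2⟩)

theorem continuous_pillowMap : Continuous pillowMap := by
  have hp : Continuous fun q : ↥(S1 ×ˢ S1 ×ˢ D2) => pillow q.1.1 q.1.2.1 := by
    refine (PiLp.continuous_toLp 2 _).comp (continuous_pi fun i => ?_)
    fin_cases i <;> fun_prop
  refine .prodMk (.subtype_mk ((hp.norm.inv₀ fun q => ?_).smul hp) _) (by fun_prop)
  exact norm_ne_zero_iff.2 (pillow_ne_zero q.2.1 q.2.2.1)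

theorem pillowMap_upsilon (q : ↥(S1 ×ˢ S1 ×ˢ D2)) : pillowMap (upsilon q) = pillowMap q := by
  simp only [pillowMap, upsilon, pillow_neg_conj_conj]

theorem eq_or_eq_upsilon_of_pillowMap_eq {a b : ↥(S1 ×ˢ S1 ×ˢ D2)}
    (h : pillowMap a = pillowMap b) : a = b ∨ b = upsilon a := by
  obtain ⟨hsphere, hdisk⟩ := Prod.ext_iff.mp h
  have hray : SameRay ℝ (pillow a.1.1 a.1.2.1) (pillow b.1.1 b.1.2.1) :=
    sameRay_iff_inv_norm_smul_eq.2 (.inr (.inr (congrArg Subtype.val hsphere)))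
  obtain ⟨l, hl, hlab⟩ := hray.exists_pos_left (pillow_ne_zero a.2.1 a.2.2.1)
    (pillow_ne_zero b.2.1 b.2.2.1)
  rcases eq_or_eq_neg_conj_of_pillow_eq a.2.1 a.2.2.1 b.2.1 b.2.2.1
    (pillow_eq_of_smul_pillow_eq a.2.1 a.2.2.1 b.2.1 b.2.2.1 hl hlab) with ⟨ht, hz⟩ | ⟨ht, hz⟩
  · exact .inl (Subtype.ext (Prod.ext ht.symm (Prod.ext hz.symm (congrArg Subtype.val hdisk))))
  · exact .inr (Subtype.ext (Prod.ext ht (Prod.ext hz (congrArg Subtype.val hdisk).symm)))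

theorem surjective_pillowMap : Function.Surjective pillowMap := by
  rintro ⟨⟨ω, hω⟩, w⟩
  obtain ⟨t, ht, z, hz, s, hs, hpillow⟩ := exists_pillow_eq_smul (mem_sphere_zero_iff_norm.1 hω)
  refine ⟨⟨(t, z, w), ht, hz, w.2⟩, Prod.ext (Subtype.ext ?_) rfl⟩
  simp only [pillowMap, hpillow, norm_smul, mem_sphere_zero_iff_norm.1 hω,
    Real.norm_of_nonneg hs.le, mul_one, inv_smul_smul₀ hs.ne']

end Pillowcase

/-- The quotient of `S¹ × S¹ × D²` by the identification of each point with its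
image under `υ` is homeomorphic to `S² × D²`. -/
theorem stmt7 :
    Nonempty (Quot (fun a b => b = upsilon a) ≃ₜ
      ↥(Metric.sphere (0 : EuclideanSpace ℝ (Fin 3)) 1) × ↥D2) :=
  Quot.nonempty_homeomorph_of_continuous_surjective continuous_pillowMap surjective_pillowMap
    (fun a _ hab => hab ▸ (pillowMap_upsilon a).symm) fun _ _ => eq_or_eq_upsilon_of_pillowMap_eq
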